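/- Let (Ω, 𝓕) be a measurable space, let K_∞ be a Markov kernel on Ω with invariant probability measure π (i.e., πK_∞ = π), and suppose K_∞ is uniformly ergodic: there exist constants C < ∞ and ρ ∈ (0,1) such that sup_{x ∈ Ω} ‖K_∞^t(x,·) − π‖_TV ≤ C ρ^t for all t ∈ ℕ. Let (K_t)_{t ∈ ℕ} be a sequence of Markov kernels on Ω such that δ_t := sup_{x ∈ Ω} ‖K_t(x,·) − K_∞(x,·)‖_TV satisfies δ_t → 0 as t → ∞. Let μ_0 be any probability measure on Ω and define recursively μ_{t+1} = μ_t K_t (the law of the inhomogeneous Markov chain whose step-t transition kernel is K_t). Then ‖μ_t − π‖_TV → 0 as t → ∞. -/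

import Mathlib

/-!
Compare the chain run for `n` steps from time `s` with `n` steps of the exact kernel started
from the same law `μ s`. Markov kernels are contractions in total variation, so the error
committed at each step is never amplified afterwards and the two laws differ by at most
`δ s + ⋯ + δ (s + n - 1)`, while uniform ergodicity puts the exact `n`-step law within `C ρ ^ n`
of `π`. Choosing `n` first and then `s` large makes both terms small.
-/

open MeasureTheory ProbabilityTheory Filter

/-- Total variation distance between two measures:
`‖μ − ν‖_TV = sup_{A measurable} |μ(A) − ν(A)|`. -/
noncomputable def tvDist {Ω : Type*} [MeasurableSpace Ω] (μ ν : Measure Ω) : ℝ :=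
  ⨆ A : {s : Set Ω // MeasurableSet s}, |(μ A.1).toReal - (ν A.1).toReal|

/-- `t`-step iterate of a Markov kernel. -/
noncomputable def kernelIter {Ω : Type*} [MeasurableSpace Ω]
    (K : Kernel Ω Ω) : ℕ → Kernel Ω Ω
  | 0 => Kernel.id
  | (n + 1) => K.comp (kernelIter K n)

open Set

section TotalVariation

variable {Ω Ω' : Type*} [MeasurableSpace Ω] [MeasurableSpace Ω']

lemma tvDist_le_of_forall {μ ν : Measure Ω} {D : ℝ}
    (h : ∀ A, MeasurableSet A → |μ.real A - ν.real A| ≤ D) : tvDist μ ν ≤ D :=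
  haveI : Nonempty {s : Set Ω // MeasurableSet s} := ⟨⟨∅, .empty⟩⟩
  ciSup_le fun A => h A.1 A.2

lemma measureReal_bind (μ : Measure Ω) (κ : Kernel Ω Ω') [IsFiniteKernel κ] {A : Set Ω'}
    (hA : MeasurableSet A) : (κ ∘ₘ μ).real A = ∫ x, (κ x).real A ∂μ := by
  rw [measureReal_def, Measure.bind_apply hA κ.measurable.aemeasurable,
    ← integral_toReal (κ.measurable_coe hA).aemeasurable (ae_of_all _ fun _ => measure_lt_top _ _)]
  rfl

variable (μ ν : Measure Ω) [IsProbabilityMeasure μ] [IsProbabilityMeasure ν]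

lemma abs_measureReal_sub_le_one (A : Set Ω) : |μ.real A - ν.real A| ≤ 1 :=
  abs_sub_le_of_nonneg_of_le measureReal_nonneg measureReal_le_one
    measureReal_nonneg measureReal_le_one

lemma abs_measureReal_sub_le_tvDist {A : Set Ω} (hA : MeasurableSet A) :
    |μ.real A - ν.real A| ≤ tvDist μ ν :=
  le_ciSup (f := fun A : {s : Set Ω // MeasurableSet s} => |μ.real A.1 - ν.real A.1|)
    ⟨1, by rintro _ ⟨A, rfl⟩; exact abs_measureReal_sub_le_one μ ν A.1⟩ ⟨A, hA⟩

lemma tvDist_nonneg : 0 ≤ tvDist μ ν :=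
  (abs_nonneg _).trans (abs_measureReal_sub_le_tvDist μ ν .empty)

lemma tvDist_le_one : tvDist μ ν ≤ 1 :=
  tvDist_le_of_forall fun A _ => abs_measureReal_sub_le_one μ ν A

lemma tvDist_triangle (ξ : Measure Ω) [IsProbabilityMeasure ξ] :
    tvDist μ ξ ≤ tvDist μ ν + tvDist ν ξ :=
  tvDist_le_of_forall fun _ hA => (abs_sub_le _ _ _).trans
    (add_le_add (abs_measureReal_sub_le_tvDist μ ν hA) (abs_measureReal_sub_le_tvDist ν ξ hA))

/-- The layer-cake formula writes `∫ f` as an average over `t ∈ (0, 1]` of the measures of the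
superlevel sets `{t ≤ f}`. -/
lemma abs_integral_sub_integral_le_tvDist {f : Ω → ℝ} (hf : Measurable f)
    (hf01 : ∀ x, f x ∈ Icc 0 1) :
    |∫ x, f x ∂μ - ∫ x, f x ∂ν| ≤ tvDist μ ν := by
  have layer_cake (m : Measure Ω) [IsProbabilityMeasure m] :
      ∫ x, f x ∂m = ∫ t in Ioc 0 1, m.real {x | t ≤ f x} :=
    (Integrable.of_mem_Icc 0 1 hf.aemeasurable (ae_of_all _ hf01)).integral_eq_integral_Ioc_meas_le
      (ae_of_all _ fun x => (hf01 x).1) (ae_of_all _ fun x => (hf01 x).2)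
  have integrable_tail (m : Measure Ω) [IsProbabilityMeasure m] :
      Integrable (fun t => m.real {x | t ≤ f x}) (volume.restrict (Ioc 0 1)) :=
    have tail_antitone : Antitone fun t : ℝ => m.real {x | t ≤ f x} :=
      fun _ _ hst => measureReal_mono fun _ hx => hst.trans hx
    .of_mem_Icc 0 1 tail_antitone.measurable.aemeasurable
      (ae_of_all _ fun _ => ⟨measureReal_nonneg, measureReal_le_one⟩)
  rw [layer_cake μ, layer_cake ν, ← integral_sub (integrable_tail μ) (integrable_tail ν)]
  calc _ ≤ ∫ t in Ioc (0 : ℝ) 1, |μ.real {x | t ≤ f x} - ν.real {x | t ≤ f x}| :=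
        abs_integral_le_integral_abs
    _ ≤ ∫ _ in Ioc (0 : ℝ) 1, tvDist μ ν :=
        integral_mono_of_nonneg (ae_of_all _ fun _ => abs_nonneg _) (integrable_const _)
          (ae_of_all _ fun _ => abs_measureReal_sub_le_tvDist μ ν (hf measurableSet_Ici))
    _ = tvDist μ ν := by simp

lemma integrable_measureReal_apply (κ : Kernel Ω Ω') [IsMarkovKernel κ] {A : Set Ω'}
    (hA : MeasurableSet A) : Integrable (fun x => (κ x).real A) μ :=
  .of_mem_Icc 0 1 (κ.measurable_coe hA).ennreal_toReal.aemeasurable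
    (ae_of_all _ fun _ => ⟨measureReal_nonneg, measureReal_le_one⟩)

lemma tvDist_bind_le_tvDist (L : Kernel Ω Ω') [IsMarkovKernel L] :
    tvDist (L ∘ₘ μ) (L ∘ₘ ν) ≤ tvDist μ ν :=
  tvDist_le_of_forall fun _ hA => by
    rw [measureReal_bind μ L hA, measureReal_bind ν L hA]
    exact abs_integral_sub_integral_le_tvDist μ ν (L.measurable_coe hA).ennreal_toReal
      fun _ => ⟨measureReal_nonneg, measureReal_le_one⟩

lemma tvDist_bind_bind_le (κ η : Kernel Ω Ω') [IsMarkovKernel κ] [IsMarkovKernel η] {D : ℝ}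
    (hD : ∀ x, tvDist (κ x) (η x) ≤ D) : tvDist (κ ∘ₘ μ) (η ∘ₘ μ) ≤ D :=
  tvDist_le_of_forall fun A hA => by
    rw [measureReal_bind μ κ hA, measureReal_bind μ η hA,
      ← integral_sub (integrable_measureReal_apply μ κ hA) (integrable_measureReal_apply μ η hA)]
    calc _ ≤ ∫ x, |(κ x).real A - (η x).real A| ∂μ := abs_integral_le_integral_abs
      _ ≤ ∫ _, D ∂μ := integral_mono_of_nonneg (ae_of_all _ fun _ => abs_nonneg _)
          (integrable_const D)
          (ae_of_all _ fun x => (abs_measureReal_sub_le_tvDist _ _ hA).trans (hD x))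
      _ = D := by simp

lemma tvDist_bind_le_of_forall (κ : Kernel Ω Ω') [IsMarkovKernel κ] (ξ : Measure Ω')
    [IsProbabilityMeasure ξ] {D : ℝ} (hD : ∀ x, tvDist (κ x) ξ ≤ D) : tvDist (κ ∘ₘ μ) ξ ≤ D := by
  simpa [Measure.bind_const] using tvDist_bind_bind_le μ κ (Kernel.const Ω ξ) hD

end TotalVariation

instance isMarkovKernel_kernelIter {Ω : Type*} [MeasurableSpace Ω] (L : Kernel Ω Ω)
    [IsMarkovKernel L] (n : ℕ) : IsMarkovKernel (kernelIter L n) := by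
  induction n with
  | zero => rw [kernelIter]; infer_instance
  | succ n ih => rw [kernelIter]; infer_instance

lemma tvDist_chain_kernelIter_le_sum {Ω : Type*} [MeasurableSpace Ω]
    (K : ℕ → Kernel Ω Ω) [∀ t, IsMarkovKernel (K t)] (L : Kernel Ω Ω) [IsMarkovKernel L]
    {δ : ℕ → ℝ} (hδ : ∀ t x, tvDist (K t x) (L x) ≤ δ t)
    (μ : ℕ → Measure Ω) [∀ t, IsProbabilityMeasure (μ t)] (hμ : ∀ t, μ (t + 1) = K t ∘ₘ μ t)
    (s n : ℕ) : tvDist (μ (s + n)) (kernelIter L n ∘ₘ μ s) ≤ ∑ j ∈ Finset.range n, δ (s + j) := by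
  induction n with
  | zero =>
    rw [add_zero, kernelIter, Measure.id_comp, Finset.sum_range_zero]
    exact tvDist_le_of_forall fun _ _ => by simp
  | succ n ih =>
    calc tvDist (μ (s + (n + 1))) (kernelIter L (n + 1) ∘ₘ μ s)
        = tvDist (K (s + n) ∘ₘ μ (s + n)) (L ∘ₘ kernelIter L n ∘ₘ μ s) := by
          rw [← add_assoc, hμ, kernelIter, Measure.comp_assoc]
      _ ≤ tvDist (K (s + n) ∘ₘ μ (s + n)) (L ∘ₘ μ (s + n))
          + tvDist (L ∘ₘ μ (s + n)) (L ∘ₘ kernelIter L n ∘ₘ μ s) := tvDist_triangle _ _ _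
      _ ≤ δ (s + n) + ∑ j ∈ Finset.range n, δ (s + j) :=
          add_le_add (tvDist_bind_bind_le _ _ _ (hδ (s + n)))
            ((tvDist_bind_le_tvDist _ _ L).trans ih)
      _ = ∑ j ∈ Finset.range (n + 1), δ (s + j) := by rw [Finset.sum_range_succ, add_comm]

lemma tendsto_zero_of_le_sum_shift_add {a δ b : ℕ → ℝ} (ha : ∀ t, 0 ≤ a t)
    (hδ : Tendsto δ atTop (nhds 0)) (hb : Tendsto b atTop (nhds 0))
    (h : ∀ s n, a (s + n) ≤ ∑ j ∈ Finset.range n, δ (s + j) + b n) :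
    Tendsto a atTop (nhds 0) := by
  refine tendsto_order.2 ⟨fun c hc => .of_forall fun t => hc.trans_le (ha t), fun ε hε => ?_⟩
  obtain ⟨n, hn⟩ := (hb.eventually (gt_mem_nhds hε)).exists
  have h_bound : Tendsto (fun s => ∑ j ∈ Finset.range n, δ (s + j) + b n) atTop (nhds (b n)) := by
    simpa using (tendsto_finsetSum (Finset.range n) fun j _ =>
      hδ.comp (tendsto_add_atTop_nat j)).add_const (b n)
  rw [← map_add_atTop_eq_nat n, eventually_map]
  filter_upwards [h_bound.eventually (gt_mem_nhds hn)] with s hs using (h s n).trans_lt hs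

theorem tv_convergence_of_uniformly_converging_kernels_general
    {Ω : Type*} [MeasurableSpace Ω]
    (Kinf : Kernel Ω Ω) [IsMarkovKernel Kinf]
    (π : Measure Ω) [IsProbabilityMeasure π]
    (C ρ : ℝ) (hρ : ρ ∈ Set.Ioo (0 : ℝ) 1)
    (herg : ∀ t : ℕ, ∀ x : Ω, tvDist (kernelIter Kinf t x) π ≤ C * ρ ^ t)
    (K : ℕ → Kernel Ω Ω) [∀ t, IsMarkovKernel (K t)]
    (hδ : Tendsto (fun t : ℕ => ⨆ x : Ω, tvDist (K t x) (Kinf x)) atTop (nhds 0))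
    (μ₀ : Measure Ω) [IsProbabilityMeasure μ₀]
    (μ : ℕ → Measure Ω)
    (hμ₀ : μ 0 = μ₀)
    (hμ : ∀ t : ℕ, μ (t + 1) = (μ t).bind (fun x => (K t) x)) :
    Tendsto (fun t : ℕ => tvDist (μ t) π) atTop (nhds 0) := by
  have : ∀ t, IsProbabilityMeasure (μ t) := fun t => by
    induction t with
    | zero => rw [hμ₀]; infer_instance
    | succ t ih => rw [hμ t]; infer_instance
  have hK_le : ∀ t x, tvDist (K t x) (Kinf x) ≤ ⨆ y, tvDist (K t y) (Kinf y) := fun t x =>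
    le_ciSup (f := fun y => tvDist (K t y) (Kinf y))
      ⟨1, by rintro _ ⟨y, rfl⟩; exact tvDist_le_one _ _⟩ x
  have h_geom : Tendsto (fun n : ℕ => C * ρ ^ n) atTop (nhds 0) := by
    simpa using (tendsto_pow_atTop_nhds_zero_of_lt_one hρ.1.le hρ.2).const_mul C
  refine tendsto_zero_of_le_sum_shift_add (fun t => tvDist_nonneg _ _) hδ h_geom fun s n => ?_
  calc tvDist (μ (s + n)) π
      ≤ tvDist (μ (s + n)) (kernelIter Kinf n ∘ₘ μ s) + tvDist (kernelIter Kinf n ∘ₘ μ s) π :=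
        tvDist_triangle _ _ _
    _ ≤ ∑ j ∈ Finset.range n, (⨆ x, tvDist (K (s + j) x) (Kinf x)) + C * ρ ^ n :=
        add_le_add (tvDist_chain_kernelIter_le_sum K Kinf hK_le μ hμ s n)
          (tvDist_bind_le_of_forall _ _ _ (herg n))

/-- An inhomogeneous Markov chain whose step-`t` kernels converge uniformly in total
variation to a uniformly ergodic kernel `Kinf` with invariant distribution `π` has
marginal laws converging to `π` in total variation. -/
theorem tv_convergence_of_uniformly_converging_kernels
    {Ω : Type*} [MeasurableSpace Ω]
    (Kinf : Kernel Ω Ω) [IsMarkovKernel Kinf]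
    (π : Measure Ω) [IsProbabilityMeasure π]
    (hinv : π.bind (fun x => Kinf x) = π)
    (C ρ : ℝ) (hρ : ρ ∈ Set.Ioo (0 : ℝ) 1)
    (herg : ∀ t : ℕ, ∀ x : Ω, tvDist (kernelIter Kinf t x) π ≤ C * ρ ^ t)
    (K : ℕ → Kernel Ω Ω) [∀ t, IsMarkovKernel (K t)]
    (hδ : Tendsto (fun t : ℕ => ⨆ x : Ω, tvDist (K t x) (Kinf x)) atTop (nhds 0))
    (μ₀ : Measure Ω) [IsProbabilityMeasure μ₀]
    (μ : ℕ → Measure Ω)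
    (hμ₀ : μ 0 = μ₀)
    (hμ : ∀ t : ℕ, μ (t + 1) = (μ t).bind (fun x => (K t) x)) :
    Tendsto (fun t : ℕ => tvDist (μ t) π) atTop (nhds 0) :=
  tv_convergence_of_uniformly_converging_kernels_general Kinf π C ρ hρ herg K hδ μ₀ μ hμ₀ hμ
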